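/- arXiv:0710.3377 — 4 statements merged into one kernel-verified Lean document; each statement's English description precedes it below -/
import Mathlib

section
/- For every integer b ≥ 1 and n ≥ 1, the expectation of Z_n restricted to the event {Z_n ≤ b} satisfies E[Z_n · 1_{Z_n ≤ b}] ≤ b · n^b · q_1^{n-b}, where Z_n is the size of the n-th generation of a Galton–Watson tree with offspring distribution (q_k), q_0 = 0. -/
/-!
Every vertex has at least one child almost surely, so `Z` is nondecreasing and it grows by at
least one in each generation `m` whose first individual has `ξ m 0 ≠ 1` children. Hence on
`{Z_n ≤ b}` at least `n - b` of the first `n` generations have `ξ m 0 = 1`. By independence each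
fixed set of `n - b` such generations has probability `q₁ ^ (n - b)`, and a union bound over the
`choose n (n - b) ≤ n ^ b` choices gives `P(Z_n ≤ b) ≤ n ^ b q₁ ^ (n - b)`; finally
`Z_n ≤ b` on the event.
-/

open MeasureTheory ProbabilityTheory Finset
open scoped ENNReal

theorem ENNReal.zpow_le_zpow_of_le_one {x : ℝ≥0∞} (hx : x ≤ 1) {a b : ℤ} (h : a ≤ b) :
    x ^ b ≤ x ^ a := by
  rw [← inv_inv x, ENNReal.inv_zpow' x⁻¹, ENNReal.inv_zpow' x⁻¹]
  exact ENNReal.zpow_le_of_le (ENNReal.one_le_inv.mpr hx) (neg_le_neg h)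

theorem Nat.choose_sub_le_pow {n : ℕ} (hn : 1 ≤ n) (b : ℕ) : n.choose (n - b) ≤ n ^ b := by
  rcases le_total b n with hbn | hnb
  · rw [Nat.choose_symm hbn]
    exact Nat.choose_le_pow n b
  · rw [Nat.sub_eq_zero_of_le hnb, Nat.choose_zero_right]
    exact Nat.one_le_pow _ _ hn

theorem Finset.add_pred_le_sum_range {f : ℕ → ℕ} (hf : ∀ i, 1 ≤ f i) {k : ℕ} (hk : 1 ≤ k) :
    k + (f 0 - 1) ≤ ∑ i ∈ range k, f i := by
  obtain ⟨k, rfl⟩ := Nat.exists_eq_add_of_le' hk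
  have : k ≤ ∑ i ∈ range k, f (i + 1) := by
    simpa using Finset.sum_le_sum fun i (_ : i ∈ range k) => hf (i + 1)
  rw [Finset.sum_range_succ']
  have := hf 0
  omega

section Deterministic

variable {ξ : ℕ → ℕ → ℕ} {Z : ℕ → ℕ}

theorem card_filter_ne_one_add_le (hξ : ∀ m i, 1 ≤ ξ m i) (hZ0 : 1 ≤ Z 0)
    (hZ : ∀ m, Z (m + 1) = ∑ i ∈ range (Z m), ξ m i) (n : ℕ) :
    #{m ∈ range n | ξ m 0 ≠ 1} + Z 0 ≤ Z n := by
  induction n with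
  | zero => simp
  | succ n ih =>
    have hstep := add_pred_le_sum_range (hξ n) (hZ0.trans (le_add_self.trans ih))
    rw [← hZ n] at hstep
    have := hξ n 0
    rw [range_add_one, filter_insert]
    split_ifs with h
    · rw [card_insert_of_notMem (by simp)]
      omega
    · omega

theorem exists_powersetCard_forall_eq_one (hξ : ∀ m i, 1 ≤ ξ m i) (hZ0 : Z 0 = 1)
    (hZ : ∀ m, Z (m + 1) = ∑ i ∈ range (Z m), ξ m i) {n b : ℕ} (hZn : Z n ≤ b) :
    ∃ S ∈ (range n).powersetCard (n - b), ∀ m ∈ S, ξ m 0 = 1 := by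
  have hgrowth := card_filter_ne_one_add_le hξ hZ0.ge hZ n
  have hsplit := card_filter_add_card_filter_not (s := range n) (p := fun m => ξ m 0 ≠ 1)
  rw [card_range] at hsplit
  simp only [ne_eq, not_not] at hsplit hgrowth
  obtain ⟨S, hS, hcard⟩ :=
    exists_subset_card_eq (s := {m ∈ range n | ξ m 0 = 1}) (n := n - b) (by omega)
  exact ⟨S, mem_powersetCard.mpr ⟨hS.trans (filter_subset _ _), hcard⟩,
    fun m hm => (mem_filter.mp (hS hm)).2⟩

end Deterministic

theorem ProbabilityTheory.iIndepFun.measure_biInter_preimage_eq_pow {Ω ι β : Type*}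
    [MeasurableSpace Ω] [MeasurableSpace β] {μ : Measure Ω} {X : ι → Ω → β}
    (hX : iIndepFun X μ) {A : Set β} (hA : MeasurableSet A) {p : ℝ≥0∞}
    (hp : ∀ i, μ (X i ⁻¹' A) = p) (S : Finset ι) :
    μ (⋂ i ∈ S, X i ⁻¹' A) = p ^ #S := by
  rw [hX.measure_inter_preimage_eq_mul S fun _ _ => hA, prod_congr rfl fun i _ => hp i,
    prod_const]

theorem measure_generation_le_le {Ω : Type*} [MeasurableSpace Ω] {μ : Measure Ω}
    {ξ : ℕ → ℕ → Ω → ℕ} {Z : ℕ → Ω → ℕ} (hindep : iIndepFun (fun (p : ℕ × ℕ) ω => ξ p.1 p.2 ω) μ) {q : ℕ → ℝ≥0∞} (hq0 : q 0 = 0)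
    (hdist : ∀ n i k, μ {ω | ξ n i ω = k} = q k) (hZ0 : ∀ ω, Z 0 ω = 1)
    (hZrec : ∀ n ω, Z (n + 1) ω = ∑ i ∈ range (Z n ω), ξ n i ω) (n b : ℕ) :
    μ {ω | Z n ω ≤ b} ≤ n.choose (n - b) * q 1 ^ (n - b) := by
  have hpos : ∀ᵐ ω ∂μ, ∀ m i, 1 ≤ ξ m i ω := by
    refine ae_all_iff.mpr fun m => ae_all_iff.mpr fun i => ae_iff.mpr ?_
    simp [hq0, hdist m i 0]
  have hfirst : iIndepFun (fun m => ξ m 0) μ :=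
    hindep.precomp (g := fun m => (m, 0)) fun _ _ h => (Prod.mk.inj h).1
  have hcover : {ω | Z n ω ≤ b} ≤ᵐ[μ]
      (⋃ S ∈ (range n).powersetCard (n - b), ⋂ m ∈ S, ξ m 0 ⁻¹' {1} : Set Ω) := by
    filter_upwards [hpos] with ω hω hZn
    obtain ⟨S, hS, hone⟩ :=
      exists_powersetCard_forall_eq_one (Z := (Z · ω)) hω (hZ0 ω) (hZrec · ω) hZn
    exact Set.mem_biUnion hS (Set.mem_iInter₂.mpr hone)
  calc μ {ω | Z n ω ≤ b}
      ≤ ∑ S ∈ (range n).powersetCard (n - b), μ (⋂ m ∈ S, ξ m 0 ⁻¹' {1}) :=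
        (measure_mono_ae hcover).trans (measure_biUnion_finset_le _ _)
    _ = ∑ S ∈ (range n).powersetCard (n - b), q 1 ^ (n - b) := by
        refine sum_congr rfl fun S hS => ?_
        rw [hfirst.measure_biInter_preimage_eq_pow (measurableSet_singleton 1)
          (fun m => hdist m 0 1), (mem_powersetCard.mp hS).2]
    _ = n.choose (n - b) * q 1 ^ (n - b) := by
        rw [sum_const, nsmul_eq_mul, card_powersetCard, card_range]

theorem stmt_0_general
    {Ω : Type*} [MeasurableSpace Ω] (μ : Measure Ω) [IsProbabilityMeasure μ]
    (ξ : ℕ → ℕ → Ω → ℕ)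
    (hindep : iIndepFun (fun (p : ℕ × ℕ) ω => ξ p.1 p.2 ω) μ)
    (q : ℕ → ℝ≥0∞) (hq0 : q 0 = 0)
    (hdist : ∀ n i k, μ {ω | ξ n i ω = k} = q k)
    (Z : ℕ → Ω → ℕ) (hZ0 : ∀ ω, Z 0 ω = 1)
    (hZrec : ∀ n ω, Z (n + 1) ω = ∑ i ∈ Finset.range (Z n ω), ξ n i ω)
    (b n : ℕ) (hn : 1 ≤ n) :
    ∫⁻ ω in {ω | Z n ω ≤ b}, (Z n ω : ℝ≥0∞) ∂μ
      ≤ (b : ℝ≥0∞) * (n : ℝ≥0∞) ^ b * (q 1) ^ ((n : ℤ) - (b : ℤ)) := by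
  have hq1 : q 1 ≤ 1 := hdist 0 0 1 ▸ prob_le_one
  have hchoose : (n.choose (n - b) : ℝ≥0∞) ≤ (n : ℝ≥0∞) ^ b := by
    exact_mod_cast Nat.choose_sub_le_pow hn b
  -- for `n < b` the natural subtraction truncates to `0`, while the integer exponent is negative
  have hexp : q 1 ^ (n - b) ≤ q 1 ^ ((n : ℤ) - (b : ℤ)) := by
    rw [← zpow_natCast]
    exact ENNReal.zpow_le_zpow_of_le_one hq1 (by omega)
  calc ∫⁻ ω in {ω | Z n ω ≤ b}, (Z n ω : ℝ≥0∞) ∂μ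
      ≤ ∫⁻ _ in {ω | Z n ω ≤ b}, (b : ℝ≥0∞) ∂μ :=
        setLIntegral_mono measurable_const fun ω hω => by exact_mod_cast hω
    _ = b * μ {ω | Z n ω ≤ b} := setLIntegral_const _ _
    _ ≤ b * (n.choose (n - b) * q 1 ^ (n - b)) := by
        gcongr
        exact measure_generation_le_le hindep hq0 hdist hZ0 hZrec n b
    _ ≤ b * n ^ b * q 1 ^ ((n : ℤ) - (b : ℤ)) := by
        rw [mul_assoc]
        gcongr

/-- For a Galton–Watson process `Z` with `Z 0 = 1`, offspring
distribution `q` (with `q 0 = 0`), built from the i.i.d. array `ξ` of offspring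
variables via `Z (n+1) = ∑_{i < Z n} ξ n i`, one has, for all `b, n ≥ 1`,
`E[Z_n · 1_{Z_n ≤ b}] ≤ b · n^b · q_1^{n-b}`. -/
theorem stmt_0
    {Ω : Type*} [MeasurableSpace Ω] (μ : Measure Ω) [IsProbabilityMeasure μ]
    (ξ : ℕ → ℕ → Ω → ℕ) (hmeas : ∀ n i, Measurable (ξ n i))
    (hindep : iIndepFun (fun (p : ℕ × ℕ) ω => ξ p.1 p.2 ω) μ)
    (q : ℕ → ℝ≥0∞) (hq0 : q 0 = 0)
    (hdist : ∀ n i k, μ {ω | ξ n i ω = k} = q k)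
    (Z : ℕ → Ω → ℕ) (hZ0 : ∀ ω, Z 0 ω = 1)
    (hZrec : ∀ n ω, Z (n + 1) ω = ∑ i ∈ Finset.range (Z n ω), ξ n i ω)
    (b n : ℕ) (hb : 1 ≤ b) (hn : 1 ≤ n) :
    ∫⁻ ω in {ω | Z n ω ≤ b}, (Z n ω : ℝ≥0∞) ∂μ
      ≤ (b : ℝ≥0∞) * (n : ℝ≥0∞) ^ b * (q 1) ^ ((n : ℤ) - (b : ℤ)) :=
  stmt_0_general μ ξ hindep q hq0 hdist Z hZ0 hZrec b n hn
end

section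
/- Let φ(t) = ln E[A^t] be the log-Laplace transform of ln A for a positive bounded random variable A with bounded inverse, assume A is not almost surely constant, and fix λ ∈ (0,1]. Define h(t) = (φ(t)φ′(t+λ) − φ(t+λ)φ′(t)) / (φ′(t+λ) − φ′(t)) for t with φ′(t) < 0 < φ′(t+λ). If t̄ satisfies φ(t̄) = φ(t̄ + λ), then h′(t̄) = 0 and h(t̄) = φ(t̄). -/
/-- Let `φ(t) = ln E[A^t]` be the (smooth, strictly convex, since `A`
is not a.s. constant and `A, 1/A` are bounded) log-Laplace transform of `ln A`, with
`φ(0) = 0`, and fix `λ ∈ (0,1]`.  Define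
`h(t) = (φ(t)φ'(t+λ) - φ(t+λ)φ'(t)) / (φ'(t+λ) - φ'(t))`.
If `t̄` satisfies `φ(t̄) = φ(t̄+λ)`, then `h'(t̄) = 0` and `h(t̄) = φ(t̄)`. -/
theorem stmt_6 (φ : ℝ → ℝ) (hφ : ContDiff ℝ (⊤ : ℕ∞) φ) (hconv : StrictConvexOn ℝ Set.univ φ)
    (hφ0 : φ 0 = 0) (lam : ℝ) (hlam0 : 0 < lam) (hlam1 : lam ≤ 1)
    (h : ℝ → ℝ)
    (hdef : ∀ t, h t = (φ t * deriv φ (t + lam) - φ (t + lam) * deriv φ t) /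
        (deriv φ (t + lam) - deriv φ t))
    (tb : ℝ) (htb : φ tb = φ (tb + lam)) :
    deriv h tb = 0 ∧ h tb = φ tb := by
  have hdiff : Differentiable ℝ φ := hφ.differentiable (by simp)
  have hφ' : ContDiff ℝ ((⊤:ℕ∞):WithTop ℕ∞) (deriv φ) := (contDiff_infty_iff_deriv.mp (hφ.of_le (by simp))).2
  have hdiff' : Differentiable ℝ (deriv φ) := hφ'.differentiable (by simp)
  -- strict monotonicity of deriv φ
  have hmono : StrictMonoOn (deriv φ) Set.univ :=
    hconv.strictMonoOn_deriv (fun x _ => hdiff.differentiableAt)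
  have hlt : deriv φ tb < deriv φ (tb + lam) :=
    hmono trivial trivial (by linarith)
  have hDne : deriv φ (tb + lam) - deriv φ tb ≠ 0 := by linarith
  constructor
  · -- derivative of h at tb
    have hfun : h = fun t => (φ t * deriv φ (t + lam) - φ (t + lam) * deriv φ t) /
        (deriv φ (t + lam) - deriv φ t) := funext hdef
    -- derivatives of shifted functions
    have hφtb : HasDerivAt φ (deriv φ tb) tb := hdiff.differentiableAt.hasDerivAt
    have hφsh : HasDerivAt (fun t => φ (t + lam)) (deriv φ (tb + lam)) tb := by
      simpa [Function.comp_def] using (hdiff.differentiableAt.hasDerivAt (x := tb + lam)).comp tb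
        ((hasDerivAt_id tb).add_const lam)
    have hφ'tb : HasDerivAt (deriv φ) (deriv (deriv φ) tb) tb :=
      hdiff'.differentiableAt.hasDerivAt
    have hφ'sh : HasDerivAt (fun t => deriv φ (t + lam)) (deriv (deriv φ) (tb + lam)) tb := by
      simpa [Function.comp_def] using (hdiff'.differentiableAt.hasDerivAt (x := tb + lam)).comp tb
        ((hasDerivAt_id tb).add_const lam)
    have hN : HasDerivAt (fun t => φ t * deriv φ (t + lam) - φ (t + lam) * deriv φ t)
        (deriv φ tb * deriv φ (tb + lam) + φ tb * deriv (deriv φ) (tb + lam) -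
          (deriv φ (tb + lam) * deriv φ tb + φ (tb + lam) * deriv (deriv φ) tb)) tb :=
      (hφtb.mul hφ'sh).sub (hφsh.mul hφ'tb)
    have hD : HasDerivAt (fun t => deriv φ (t + lam) - deriv φ t)
        (deriv (deriv φ) (tb + lam) - deriv (deriv φ) tb) tb := hφ'sh.sub hφ'tb
    have hH := hN.fun_div hD hDne
    rw [hfun, hH.deriv]
    rw [htb]
    field_simp
    ring
  · rw [hdef, htb]
    field_simp
end

section
/- Let V_j = X_0 + ⋯ + X_{j−1} be a random walk with i.i.d. real increments, M_k = max_{0 ≤ j ≤ k} V_j, and c > 0. Then P(V_k < −c, M_k ≤ 0) ≥ P(V_k < −c)/(k+1). -/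
open MeasureTheory ProbabilityTheory
open scoped ENNReal

/-! Let `i ≤ k` be an index at which `V_0, …, V_k` attains its maximum. Rotating the increments
cyclically by `i` (the rotation is a power of the cycle `(List.range k).formPerm = (0 1 ⋯ k-1)`
of `ℕ`) gives a walk with the same endpoint `V_k` whose partial sums are `V_{i+j} - V_i` read
periodically, hence `≤ 0` as soon as `V_k ≤ 0`. By exchangeability the rotated increments have
the law of the original ones, so each of the `k + 1` events "the maximum sits at `i`" has
probability at most `P(V_k < -c, M_k ≤ 0)`. -/

namespace RandomWalk

def partialSum (x : ℕ → ℝ) (j : ℕ) : ℝ := ∑ r ∈ Finset.range j, x r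

theorem measurable_partialSum (j : ℕ) : Measurable fun x : ℕ → ℝ => partialSum x j := by
  unfold partialSum; fun_prop

theorem measurableSet_partialSum_mem_and_nonpos {B : Set ℝ} (hB : MeasurableSet B) (k : ℕ) :
    MeasurableSet {x | partialSum x k ∈ B ∧ ∀ j ≤ k, partialSum x j ≤ 0} := by
  simp only [Set.ofPred_and, Set.ofPred_forall]
  exact (measurable_partialSum k hB).inter
    (.iInter fun j => .iInter fun _ => measurableSet_le (measurable_partialSum j) measurable_const)

theorem formPerm_range_pow_apply {k r : ℕ} (hr : r < k) (i : ℕ) :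
    ((List.range k).formPerm ^ i) r = (r + i) % k := by
  have h := List.formPerm_pow_apply_getElem (List.range k) List.nodup_range i r
    (List.length_range.symm ▸ hr)
  simpa only [List.getElem_range, List.length_range] using h

theorem partialSum_mod_of_le (x : ℕ → ℝ) {k j : ℕ} (hj : j ≤ k) :
    partialSum (fun n => x (n % k)) j = partialSum x j :=
  Finset.sum_congr rfl fun r hr => by
    dsimp only
    rw [Nat.mod_eq_of_lt ((Finset.mem_range.mp hr).trans_le hj)]

theorem partialSum_mod_add (x : ℕ → ℝ) (k m : ℕ) :
    partialSum (fun n => x (n % k)) (k + m) =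
      partialSum x k + partialSum (fun n => x (n % k)) m := by
  rw [partialSum, Finset.sum_range_add, ← partialSum, partialSum_mod_of_le x le_rfl]
  simp only [Nat.add_mod_left, partialSum]

theorem partialSum_comp_formPerm_pow (x : ℕ → ℝ) {k j : ℕ} (hj : j ≤ k) (i : ℕ) :
    partialSum (x ∘ ⇑((List.range k).formPerm ^ i)) j =
      partialSum (fun n => x (n % k)) (i + j) - partialSum (fun n => x (n % k)) i := by
  simp only [partialSum]
  rw [Finset.sum_range_add, add_sub_cancel_left]
  refine Finset.sum_congr rfl fun r hr => ?_
  rw [Function.comp_apply, formPerm_range_pow_apply ((Finset.mem_range.mp hr).trans_le hj),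
    add_comm]

theorem partialSum_comp_formPerm_pow_self (x : ℕ → ℝ) (k i : ℕ) :
    partialSum (x ∘ ⇑((List.range k).formPerm ^ i)) k = partialSum x k := by
  rw [partialSum_comp_formPerm_pow x le_rfl, add_comm, partialSum_mod_add, add_sub_cancel_right]

theorem partialSum_comp_formPerm_pow_nonpos {x : ℕ → ℝ} {k i : ℕ} (hi : i ≤ k)
    (hmax : ∀ m ≤ k, partialSum x m ≤ partialSum x i) (hk : partialSum x k ≤ 0)
    {j : ℕ} (hj : j ≤ k) : partialSum (x ∘ ⇑((List.range k).formPerm ^ i)) j ≤ 0 := by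
  rw [partialSum_comp_formPerm_pow x hj, partialSum_mod_of_le x hi, sub_nonpos]
  rcases le_or_gt (i + j) k with hij | hij
  · rw [partialSum_mod_of_le x hij]
    exact hmax _ hij
  · obtain ⟨m, hm⟩ := Nat.exists_eq_add_of_le hij.le
    rw [hm, partialSum_mod_add, partialSum_mod_of_le x (by omega)]
    linarith [hmax m (by omega)]

theorem measurePreserving_comp_formPerm_pow {Q : Measure (ℕ → ℝ)} {k : ℕ}
    (hQ : MeasurePreserving (fun x => x ∘ (List.range k).formPerm) Q Q) (i : ℕ) :
    MeasurePreserving (fun x => x ∘ ⇑((List.range k).formPerm ^ i)) Q Q := by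
  induction i with
  | zero => exact MeasurePreserving.id Q
  | succ i ih =>
    rw [pow_succ, Equiv.Perm.coe_mul]
    exact hQ.comp ih

theorem measure_partialSum_mem_le {Q : Measure (ℕ → ℝ)} {k : ℕ}
    (hQ : MeasurePreserving (fun x => x ∘ (List.range k).formPerm) Q Q)
    {B : Set ℝ} (hB : B ⊆ Set.Iic 0) :
    Q {x | partialSum x k ∈ B} ≤
      (k + 1) * Q {x | partialSum x k ∈ B ∧ ∀ j ≤ k, partialSum x j ≤ 0} := by
  set G := {x | partialSum x k ∈ B ∧ ∀ j ≤ k, partialSum x j ≤ 0}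
  set rotate := fun (i : ℕ) (x : ℕ → ℝ) => x ∘ ⇑((List.range k).formPerm ^ i)
  have hcover : {x | partialSum x k ∈ B} ⊆ ⋃ i ∈ Finset.range (k + 1), rotate i ⁻¹' G := by
    intro x hx
    obtain ⟨i, hi, hmax⟩ := Finset.exists_max_image (Finset.range (k + 1)) (partialSum x)
      ⟨0, by simp⟩
    have hik : i ≤ k := Nat.lt_succ_iff.mp (Finset.mem_range.mp hi)
    refine Set.mem_biUnion hi ⟨?_, fun j hj => ?_⟩
    · show partialSum (x ∘ _) k ∈ B
      rwa [partialSum_comp_formPerm_pow_self]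
    · exact partialSum_comp_formPerm_pow_nonpos hik
        (fun m hm => hmax m (Finset.mem_range.mpr (Nat.lt_succ_of_le hm))) (hB hx) hj
  calc Q {x | partialSum x k ∈ B}
      ≤ ∑ i ∈ Finset.range (k + 1), Q (rotate i ⁻¹' G) :=
        (measure_mono hcover).trans (measure_biUnion_finset_le _ _)
    _ ≤ ∑ i ∈ Finset.range (k + 1), Q G := by
        refine Finset.sum_le_sum fun i _ => ?_
        have hrot := measurePreserving_comp_formPerm_pow hQ i
        calc Q (rotate i ⁻¹' G) ≤ Q.map (rotate i) G :=
              Measure.le_map_apply hrot.measurable.aemeasurable G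
          _ = Q G := by rw [hrot.map_eq]
    _ = (k + 1) * Q G := by simp

end RandomWalk

theorem measurePreserving_comp_perm_infinitePi {ι α : Type*} [MeasurableSpace α]
    (ν : Measure α) [IsProbabilityMeasure ν] (σ : Equiv.Perm ι) :
    MeasurePreserving (fun x : ι → α => x ∘ σ) (Measure.infinitePi fun _ => ν)
      (Measure.infinitePi fun _ => ν) := by
  refine ⟨by fun_prop, ?_⟩
  have := Measure.infinitePi_map_piCongrLeft (fun _ : ι => ν) σ.symm
  convert this using 2
  ext x i
  simp [MeasurableEquiv.coe_piCongrLeft, Equiv.piCongrLeft_apply_eq_cast]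

open RandomWalk in
/-- Let `V_j = X_0 + ⋯ + X_{j-1}` be a random walk with i.i.d. real
increments, `M_k = max_{0 ≤ j ≤ k} V_j` and `c > 0`.  Then
`P(V_k < -c, M_k ≤ 0) ≥ P(V_k < -c)/(k+1)`. -/
theorem stmt_8 {Ω : Type*} [MeasurableSpace Ω] (μ : Measure Ω) [IsProbabilityMeasure μ]
    (X : ℕ → Ω → ℝ) (hmeas : ∀ n, Measurable (X n))
    (hindep : iIndepFun X μ)
    (hident : ∀ n, Measure.map (X n) μ = Measure.map (X 0) μ)
    (V : ℕ → Ω → ℝ) (hV : ∀ j ω, V j ω = ∑ r ∈ Finset.range j, X r ω)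
    (k : ℕ) (c : ℝ) (hc : 0 < c) :
    μ {ω | V k ω < -c} / ((k : ℝ≥0∞) + 1)
      ≤ μ {ω | V k ω < -c ∧ ∀ j ≤ k, V j ω ≤ 0} := by
  obtain rfl : V = fun j ω => partialSum (fun n => X n ω) j := funext₂ hV
  have : IsProbabilityMeasure (μ.map (X 0)) :=
    Measure.isProbabilityMeasure_map (hmeas 0).aemeasurable
  have hW : Measurable fun ω n => X n ω := measurable_pi_lambda _ hmeas
  have hlaw : μ.map (fun ω n => X n ω) = Measure.infinitePi fun _ => μ.map (X 0) := by
    rw [hindep.map_fun_eq_infinitePi_map hmeas, funext hident]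
  have hQ := hlaw ▸ measurePreserving_comp_perm_infinitePi (μ.map (X 0)) (List.range k).formPerm
  have hB : Set.Iio (-c) ⊆ Set.Iic 0 := fun y hy => by
    simp only [Set.mem_Iio, Set.mem_Iic] at hy ⊢; linarith
  calc μ {ω | partialSum (fun n => X n ω) k < -c} / ((k : ℝ≥0∞) + 1)
      ≤ μ.map (fun ω n => X n ω) {x | partialSum x k ∈ Set.Iio (-c)} / ((k : ℝ≥0∞) + 1) :=
        by gcongr; exact Measure.le_map_apply hW.aemeasurable _
    _ ≤ μ.map (fun ω n => X n ω) _ :=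
        ENNReal.div_le_of_le_mul' (measure_partialSum_mem_le hQ hB)
    _ = _ := Measure.map_apply hW <| measurableSet_partialSum_mem_and_nonpos measurableSet_Iio k
end

section
/- Consider a birth–death chain on the integers with ω(i,i+1) + ω(i,i−1) = 1, uniformly elliptic in the sense that ω(i,i+1) ∈ [δ, 1−δ] for some δ > 0. For any 1 ≤ n < i, there is a constant c(n, δ) (independent of ω and i) such that the quenched expected exit time satisfies E_ω^0[T_{−1} ∧ T_i] ≤ c(n, δ) · E_ω^n[T_{n−1} ∧ T_i]. -/
/-!
Write `u_a` for the exit time from `(a, i)`. The difference of two exit times `u_a, u_{a+1}`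
is harmonic on `(a+1, i)`, so by the minimum principle `u_a (a+2) ≤ u_{a+1} (a+2) + u_a (a+1)`.
Feeding this into the first-step equation `u_a (a+1) = 1 + ω (a+1) u_a (a+2)` and using
`u_{a+1} (a+2) ≥ 1` gives `δ u_a (a+1) ≤ 2 u_{a+1} (a+2)`. Iterating from `a = -1` to `a = n-1`
yields the constant `(2/δ)^n`. The intermediate exit times exist: `u_{a+1}` is `u_a` corrected
by a multiple of the harmonic function built from the scale function of the chain.
-/

open Finset

variable {ω : ℤ → ℝ}

def IsHarmonicOn (ω : ℤ → ℝ) (a m : ℤ) (h : ℤ → ℝ) : Prop :=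
  ∀ j, a < j → j < m → h j = ω j * h (j + 1) + (1 - ω j) * h (j - 1)

def IsSuperharmonicOn (ω : ℤ → ℝ) (a m : ℤ) (h : ℤ → ℝ) : Prop :=
  ∀ j, a < j → j < m → ω j * h (j + 1) + (1 - ω j) * h (j - 1) ≤ h j

/-- `u j = E_ω^j[T_a ∧ T_m]`, characterized by first-step analysis. -/
def IsExitTime (ω : ℤ → ℝ) (a m : ℤ) (u : ℤ → ℝ) : Prop :=
  u a = 0 ∧ u m = 0 ∧ ∀ j, a < j → j < m → u j = 1 + ω j * u (j + 1) + (1 - ω j) * u (j - 1)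

theorem IsHarmonicOn.isSuperharmonicOn {a m : ℤ} {h : ℤ → ℝ} (hh : IsHarmonicOn ω a m h) :
    IsSuperharmonicOn ω a m h :=
  fun j haj hjm => (hh j haj hjm).ge

theorem IsExitTime.isSuperharmonicOn {a m : ℤ} {u : ℤ → ℝ} (hu : IsExitTime ω a m u) :
    IsSuperharmonicOn ω a m u :=
  fun j haj hjm => by linarith [hu.2.2 j haj hjm]

theorem IsExitTime.isHarmonicOn_sub {a b m : ℤ} {u v : ℤ → ℝ} (hu : IsExitTime ω a m u)
    (hv : IsExitTime ω b m v) (hab : a ≤ b) : IsHarmonicOn ω b m (v - u) := by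
  intro j hbj hjm
  simp only [Pi.sub_apply]
  linear_combination hv.2.2 j hbj hjm - hu.2.2 j (by omega) hjm

/-- The leftmost minimizer cannot be interior: there its left neighbour is
strictly larger, which contradicts superharmonicity. -/
theorem IsSuperharmonicOn.min_le (hω : ∀ j, ω j ∈ Set.Ioo 0 1) {a m : ℤ} {h : ℤ → ℝ}
    (hh : IsSuperharmonicOn ω a m h) {j : ℤ} (haj : a ≤ j) (hjm : j ≤ m) :
    min (h a) (h m) ≤ h j := by
  obtain ⟨k, hk, hk_min⟩ := (Icc a m).exists_min_image h ⟨j, mem_Icc.2 ⟨haj, hjm⟩⟩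
  set S := (Icc a m).filter (fun l => h l = h k)
  have hS : S.Nonempty := ⟨k, mem_filter.2 ⟨hk, rfl⟩⟩
  obtain ⟨hk₀, hk₀_eq⟩ := mem_filter.1 (S.min'_mem hS)
  set k₀ := S.min' hS
  have hk₀_ends : k₀ = a ∨ k₀ = m := by
    by_contra! h_interior
    have hak₀ : a < k₀ := lt_of_le_of_ne (mem_Icc.1 hk₀).1 h_interior.1.symm
    have hk₀m : k₀ < m := lt_of_le_of_ne (mem_Icc.1 hk₀).2 h_interior.2
    have hleft_mem : k₀ - 1 ∈ Icc a m := mem_Icc.2 ⟨by omega, by omega⟩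
    have hleft : h k < h (k₀ - 1) := by
      refine lt_of_le_of_ne (hk_min _ hleft_mem) fun heq => ?_
      have := S.min'_le (k₀ - 1) (mem_filter.2 ⟨hleft_mem, heq.symm⟩)
      omega
    have hright : h k ≤ h (k₀ + 1) := hk_min _ (mem_Icc.2 ⟨by omega, by omega⟩)
    obtain ⟨hω₀, hω₁⟩ := hω k₀
    have := hh k₀ hak₀ hk₀m
    nlinarith [mul_nonneg hω₀.le (sub_nonneg.2 hright),
      mul_pos (sub_pos.2 hω₁) (sub_pos.2 hleft)]
  have hmin : min (h a) (h m) ≤ h k := by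
    rcases hk₀_ends with h_eq | h_eq <;> rw [← hk₀_eq, h_eq]
    exacts [min_le_left _ _, min_le_right _ _]
  exact hmin.trans (hk_min j (mem_Icc.2 ⟨haj, hjm⟩))

theorem IsExitTime.nonneg (hω : ∀ j, ω j ∈ Set.Ioo 0 1) {a m : ℤ} {u : ℤ → ℝ}
    (hu : IsExitTime ω a m u) {j : ℤ} (haj : a ≤ j) (hjm : j ≤ m) : 0 ≤ u j := by
  simpa [hu.1, hu.2.1] using hu.isSuperharmonicOn.min_le hω haj hjm

theorem IsExitTime.le_add (hω : ∀ j, ω j ∈ Set.Ioo 0 1) {a b m : ℤ} {u v : ℤ → ℝ}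
    (hu : IsExitTime ω a m u) (hv : IsExitTime ω b m v) (hab : a ≤ b) {j : ℤ} (hbj : b ≤ j)
    (hjm : j ≤ m) : u j ≤ v j + u b := by
  have hub : 0 ≤ u b := hu.nonneg hω hab (hbj.trans hjm)
  have := (hu.isHarmonicOn_sub hv hab).isSuperharmonicOn.min_le hω hbj hjm
  simp only [Pi.sub_apply, hv.1, hv.2.1, hu.2.1, sub_zero, zero_sub] at this
  linarith [min_eq_left (neg_nonpos.2 hub)]

theorem IsExitTime.one_sub_mul_le (hω : ∀ j, ω j ∈ Set.Ioo 0 1) {q m : ℤ} {u v : ℤ → ℝ}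
    (hu : IsExitTime ω q m u) (hv : IsExitTime ω (q + 1) m v) (hqm : q + 1 + 1 < m) :
    (1 - ω (q + 1)) * u (q + 1) ≤ 2 * v (q + 1 + 1) := by
  have hv_ge : 1 ≤ v (q + 1 + 1) := by
    have h := hv.2.2 (q + 1 + 1) (by omega) hqm
    rw [add_sub_cancel_right, hv.1] at h
    nlinarith [(hω (q + 1 + 1)).1, hv.nonneg hω (j := q + 1 + 1 + 1) (by omega) (by omega)]
  have hu_eq : u (q + 1) = 1 + ω (q + 1) * u (q + 1 + 1) := by
    have h := hu.2.2 (q + 1) (by omega) (by omega)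
    rwa [add_sub_cancel_right, hu.1, mul_zero, add_zero] at h
  have hu_le : u (q + 1 + 1) ≤ v (q + 1 + 1) + u (q + 1) :=
    hu.le_add hω hv (by omega) (by omega) hqm.le
  obtain ⟨hω₀, hω₁⟩ := hω (q + 1)
  nlinarith [mul_le_mul_of_nonneg_left hu_le hω₀.le]

/-- The scale function of the chain started at `q`: its increments `∏ (1 - ω) / ω` are exactly
those of a harmonic function. -/
noncomputable def scale (ω : ℤ → ℝ) (q j : ℤ) : ℝ :=
  ∑ k ∈ range (j - q).toNat, ∏ l ∈ range k, (1 - ω (q + l + 1)) / ω (q + l + 1)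

theorem scale_add_natCast (q : ℤ) (k : ℕ) :
    scale ω q (q + k) = ∑ i ∈ range k, ∏ l ∈ range i, (1 - ω (q + l + 1)) / ω (q + l + 1) := by
  simp [scale]

theorem scale_self (q : ℤ) : scale ω q q = 0 := by
  simp [scale]

theorem scale_pos (hω : ∀ j, ω j ∈ Set.Ioo 0 1) {q m : ℤ} (hqm : q < m) : 0 < scale ω q m := by
  obtain ⟨k, rfl⟩ : ∃ k : ℕ, m = q + (k + 1 : ℕ) := ⟨(m - q - 1).toNat, by omega⟩
  rw [scale_add_natCast]
  refine sum_pos (fun i _ => prod_pos fun l _ => ?_) ⟨0, by simp⟩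
  obtain ⟨hω₀, hω₁⟩ := hω (q + l + 1)
  exact div_pos (sub_pos.2 hω₁) hω₀

theorem scale_isHarmonicOn (hω : ∀ j, ω j ∈ Set.Ioo 0 1) (q m : ℤ) :
    IsHarmonicOn ω q m (scale ω q) := by
  intro j hqj _
  obtain ⟨k, rfl⟩ : ∃ k : ℕ, j = q + (k + 1 : ℕ) := ⟨(j - q - 1).toNat, by omega⟩
  have hsucc : q + ((k + 1 : ℕ) : ℤ) + 1 = q + (k + 2 : ℕ) := by push_cast; ring
  have hpred : q + ((k + 1 : ℕ) : ℤ) - 1 = q + (k : ℕ) := by push_cast; ring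
  have hj : q + ((k + 1 : ℕ) : ℤ) = q + k + 1 := by push_cast; ring
  set P : ℕ → ℝ := fun i => ∏ l ∈ range i, (1 - ω (q + l + 1)) / ω (q + l + 1)
  have hP : P (k + 1) = P k * ((1 - ω (q + k + 1)) / ω (q + k + 1)) := prod_range_succ _ _
  rw [hsucc, hpred, scale_add_natCast, scale_add_natCast, scale_add_natCast,
    sum_range_succ _ (k + 1), sum_range_succ _ k, hj]
  change _ + P k = ω (q + k + 1) * (_ + P k + P (k + 1)) + _
  rw [hP]
  have hω₀ := (hω (q + k + 1)).1
  field_simp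
  ring

theorem exists_isExitTime (hω : ∀ j, ω j ∈ Set.Ioo 0 1) {a q m : ℤ} {u : ℤ → ℝ}
    (hu : IsExitTime ω a m u) (haq : a ≤ q) (hqm : q < m) : ∃ z, IsExitTime ω q m z := by
  have hS := scale_pos hω hqm
  refine ⟨fun j => u j - u q * (scale ω q m - scale ω q j) / scale ω q m, ?_, ?_, ?_⟩
  · simp [scale_self, hS.ne']
  · simp [hu.2.1]
  · intro j hqj hjm
    have hS_eq := scale_isHarmonicOn hω q m j hqj hjm
    have hu_eq := hu.2.2 j (by omega) hjm
    field_simp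
    linear_combination scale ω q m * hu_eq + u q * hS_eq

theorem IsExitTime.le_pow_mul (hω : ∀ j, ω j ∈ Set.Ioo 0 1) {δ : ℝ} (hδ : 0 < δ)
    (hωδ : ∀ j, ω j ≤ 1 - δ) {a m : ℤ} {u v : ℤ → ℝ} (k : ℕ) (hu : IsExitTime ω a m u)
    (hv : IsExitTime ω (a + k) m v) (hkm : a + k + 1 < m) :
    u (a + 1) ≤ (2 / δ) ^ k * v (a + k + 1) := by
  induction k generalizing a u with
  | zero =>
    simp only [Nat.cast_zero, add_zero, pow_zero, one_mul] at hv ⊢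
    simpa [hu.1] using hu.le_add hω hv le_rfl (j := a + 1) (by omega) (by omega)
  | succ k ih =>
    push_cast at hv hkm ⊢
    rw [← add_assoc] at hv hkm ⊢
    obtain ⟨z, hz⟩ := exists_isExitTime hω hu (by omega : a ≤ a + 1) (by omega)
    have hstep : δ * u (a + 1) ≤ 2 * z (a + 1 + 1) :=
      calc δ * u (a + 1) ≤ (1 - ω (a + 1)) * u (a + 1) :=
            mul_le_mul_of_nonneg_right (by linarith [hωδ (a + 1)]) (hu.nonneg hω (by omega)
              (by omega))
        _ ≤ 2 * z (a + 1 + 1) := hu.one_sub_mul_le hω hz (by omega)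
    have hrest := ih hz (by rwa [add_right_comm a 1 (k : ℤ)]) (by omega)
    rw [add_right_comm a 1 (k : ℤ)] at hrest
    calc u (a + 1) ≤ (2 / δ) * z (a + 1 + 1) := by
          rw [div_mul_eq_mul_div, le_div_iff₀ hδ]; linarith
      _ ≤ (2 / δ) * ((2 / δ) ^ k * v (a + k + 1 + 1)) := by gcongr
      _ = (2 / δ) ^ (k + 1) * v (a + k + 1 + 1) := by ring

theorem stmt_12_general (n : ℕ) (δ : ℝ) (hδ0 : 0 < δ) :
    ∃ c : ℝ, ∀ (i : ℕ), n < i → ∀ (ω : ℤ → ℝ),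
      (∀ j, δ ≤ ω j ∧ ω j ≤ 1 - δ) →
      ∀ (f g : ℤ → ℝ),
        f (-1) = 0 → f (i : ℤ) = 0 →
        (∀ j : ℤ, -1 < j → j < (i : ℤ) →
          f j = 1 + ω j * f (j + 1) + (1 - ω j) * f (j - 1)) →
        (∀ j, 0 ≤ f j) →
        g ((n : ℤ) - 1) = 0 → g (i : ℤ) = 0 →
        (∀ j : ℤ, (n : ℤ) - 1 < j → j < (i : ℤ) →
          g j = 1 + ω j * g (j + 1) + (1 - ω j) * g (j - 1)) →
        (∀ j, 0 ≤ g j) →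
        f 0 ≤ c * g (n : ℤ) := by
  refine ⟨(2 / δ) ^ n, fun i hi ω hω f g hf₁ hf₂ hf _ hg₁ hg₂ hg _ => ?_⟩
  have hω' : ∀ j, ω j ∈ Set.Ioo 0 1 := fun j => ⟨by linarith [hω j], by linarith [hω j]⟩
  have hg' : IsExitTime ω (-1 + n) i g := by
    rw [neg_add_eq_sub]
    exact ⟨hg₁, hg₂, hg⟩
  have h := IsExitTime.le_pow_mul hω' hδ0 (fun j => (hω j).2) n ⟨hf₁, hf₂, hf⟩ hg' (by omega)
  simpa using h

/-- For a uniformly elliptic birth–death chain on the integers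
(`ω(j,j+1) ∈ [δ, 1-δ]`) and `1 ≤ n < i`, there is a constant `c(n,δ)` independent of
the environment and of `i` such that the quenched expected exit times
`f j = E_ω^j[T_{-1} ∧ T_i]` (characterized by `f(-1) = f(i) = 0` and
`f j = 1 + ω j f(j+1) + (1-ω j) f(j-1)` for `-1 < j < i`) and
`g j = E_ω^j[T_{n-1} ∧ T_i]` (boundary `g(n-1) = g(i) = 0`) satisfy
`E_ω^0[T_{-1} ∧ T_i] ≤ c(n,δ) · E_ω^n[T_{n-1} ∧ T_i]`. -/
theorem stmt_12 (n : ℕ) (hn : 1 ≤ n) (δ : ℝ) (hδ0 : 0 < δ) (hδ1 : δ ≤ 1 / 2) :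
    ∃ c : ℝ, ∀ (i : ℕ), n < i → ∀ (ω : ℤ → ℝ),
      (∀ j, δ ≤ ω j ∧ ω j ≤ 1 - δ) →
      ∀ (f g : ℤ → ℝ),
        f (-1) = 0 → f (i : ℤ) = 0 →
        (∀ j : ℤ, -1 < j → j < (i : ℤ) →
          f j = 1 + ω j * f (j + 1) + (1 - ω j) * f (j - 1)) →
        (∀ j, 0 ≤ f j) →
        g ((n : ℤ) - 1) = 0 → g (i : ℤ) = 0 →
        (∀ j : ℤ, (n : ℤ) - 1 < j → j < (i : ℤ) →
          g j = 1 + ω j * g (j + 1) + (1 - ω j) * g (j - 1)) →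
        (∀ j, 0 ≤ g j) →
        f 0 ≤ c * g (n : ℤ) :=
  stmt_12_general n δ hδ0
end
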